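/- arXiv:1609.08177 — 2 statements merged into one kernel-verified Lean document; each statement's English description precedes it below -/
import Mathlib

section
/- Let f be differentiable with L-Lipschitz gradient and g : ℝ^n → ℝ convex, F = f + g. Let s, α > 0, x ∈ ℝ^n, and define y = prox_{sg}(x - s∇f(x)) and x⁺ = prox_{αg}(x - α∇f(y)). Then F(x) - F(x⁺) ≥ (1/(2α))‖x - x⁺‖² + (1/s - L/2 - 1/(2α))‖x - y‖² + (1/(2α) - L/2)‖y - x⁺‖². -/
/-!
Each of the two prox-gradient steps decreases `g` up to inner-product terms (the variational
inequality characterising the prox, which follows from convexity of `g` and minimality along the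
segment towards a competitor), while the descent lemma bounds the increase of `f` along the same
steps. Adding the four inequalities, the gradient terms cancel, and the remaining cross term
`⟪x - x⁺, y - x⁺⟫` is eliminated by the polarization identity.
-/

open scoped RealInnerProductSpace

lemma le_of_forall_mem_Ioo_le_add_mul {a b c : ℝ} (h : ∀ θ ∈ Set.Ioo (0 : ℝ) 1, a ≤ b + θ * c) :
    a ≤ b := by
  have hlim : Filter.Tendsto (fun θ : ℝ => b + θ * c) (nhdsWithin 0 (Set.Ioi 0)) (nhds b) := by
    have : Continuous fun θ : ℝ => b + θ * c := by fun_prop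
    simpa using (this.tendsto 0).mono_left nhdsWithin_le_nhds
  exact ge_of_tendsto hlim (Filter.eventually_of_mem (Ioo_mem_nhdsGT one_pos) h)

variable {E : Type*} [NormedAddCommGroup E] [InnerProductSpace ℝ E]

lemma ConvexOn.inner_le_of_isMin_prox {g : E → ℝ} (hg : ConvexOn ℝ Set.univ g) {t : ℝ}
    (ht : 0 < t) {u p : E}
    (hmin : ∀ w, g p + ‖p - u‖ ^ 2 / (2 * t) ≤ g w + ‖w - u‖ ^ 2 / (2 * t)) (w : E) :
    ⟪u - p, w - p⟫ ≤ t * (g w - g p) := by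
  refine le_of_forall_mem_Ioo_le_add_mul (c := ‖w - p‖ ^ 2 / 2) fun θ ⟨hθ0, hθ1⟩ => ?_
  set q := p + θ • (w - p)
  have hconv : g q ≤ (1 - θ) * g p + θ * g w := by
    rw [show q = (1 - θ) • p + θ • w by module]
    simpa only [smul_eq_mul] using
      hg.2 (Set.mem_univ p) (Set.mem_univ w) (by linarith : (0 : ℝ) ≤ 1 - θ) hθ0.le (by ring)
  have hexpand : ‖q - u‖ ^ 2 = ‖p - u‖ ^ 2 - 2 * θ * ⟪u - p, w - p⟫ + θ ^ 2 * ‖w - p‖ ^ 2 := by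
    rw [show q - u = θ • (w - p) - (u - p) by module, norm_sub_sq_real, real_inner_smul_left,
      norm_smul, mul_pow, Real.norm_eq_abs, sq_abs, norm_sub_rev u p, real_inner_comm]
    ring
  have hmin' : 2 * t * g p + ‖p - u‖ ^ 2 ≤ 2 * t * g q + ‖q - u‖ ^ 2 := by
    have := mul_le_mul_of_nonneg_left (hmin q) (by positivity : (0 : ℝ) ≤ 2 * t)
    field_simp at this
    linarith
  rw [hexpand] at hmin'
  refine le_of_mul_le_mul_left ?_ hθ0
  linarith [mul_le_mul_of_nonneg_left hconv ht.le]

lemma ConvexOn.add_inner_le_of_isMin_prox_grad {g : E → ℝ} (hg : ConvexOn ℝ Set.univ g) {t : ℝ}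
    (ht : 0 < t) {x d p : E}
    (hmin : ∀ w, g p + ‖p - (x - t • d)‖ ^ 2 / (2 * t) ≤ g w + ‖w - (x - t • d)‖ ^ 2 / (2 * t))
    (w : E) : g p + t⁻¹ * ⟪x - p, w - p⟫ ≤ g w + ⟪d, w - p⟫ := by
  have h := hg.inner_le_of_isMin_prox ht hmin w
  rw [show x - t • d - p = (x - p) - t • d by abel, inner_sub_left, real_inner_smul_left] at h
  calc g p + t⁻¹ * ⟪x - p, w - p⟫
      = g p + t⁻¹ * (⟪x - p, w - p⟫ - t * ⟪d, w - p⟫) + ⟪d, w - p⟫ := by field_simp; ring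
    _ ≤ g p + t⁻¹ * (t * (g w - g p)) + ⟪d, w - p⟫ := by gcongr
    _ = g w + ⟪d, w - p⟫ := by field_simp; ring

variable [CompleteSpace E]

lemma HasGradientAt.hasDerivAt_comp_add_smul {f : E → ℝ} {a v g : E} {t : ℝ}
    (hf : HasGradientAt f g (a + t • v)) : HasDerivAt (fun t : ℝ => f (a + t • v)) ⟪g, v⟫ t := by
  have hline : HasDerivAt (fun t : ℝ => a + t • v) v t := by
    simpa using ((hasDerivAt_id t).smul_const v).const_add a
  exact (hasGradientAt_iff_hasFDerivAt.mp hf).comp_hasDerivAt t hline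

lemma le_add_inner_add_sq_of_lipschitz_gradient {f : E → ℝ} {f' : E → E}
    (hf : ∀ x, HasGradientAt f (f' x) x) {L : ℝ} (hlip : ∀ x y, ‖f' x - f' y‖ ≤ L * ‖x - y‖)
    (a b : E) : f b ≤ f a + ⟪f' a, b - a⟫ + L / 2 * ‖b - a‖ ^ 2 := by
  set v := b - a
  set φ : ℝ → ℝ := fun t => f (a + t • v) - t * ⟪f' a, v⟫ - L / 2 * t ^ 2 * ‖v‖ ^ 2
  have hφ : ∀ t, HasDerivAt φ (⟪f' (a + t • v), v⟫ - ⟪f' a, v⟫ - L * t * ‖v‖ ^ 2) t := by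
    intro t
    refine (((hf (a + t • v)).hasDerivAt_comp_add_smul.sub
      ((hasDerivAt_id t).mul_const ⟪f' a, v⟫)).sub
      (((hasDerivAt_pow 2 t).const_mul (L / 2)).mul_const (‖v‖ ^ 2))).congr_deriv ?_
    push_cast; ring
  have hφ'_nonpos : ∀ t, 0 ≤ t → ⟪f' (a + t • v), v⟫ - ⟪f' a, v⟫ - L * t * ‖v‖ ^ 2 ≤ 0 := by
    intro t ht
    calc ⟪f' (a + t • v), v⟫ - ⟪f' a, v⟫ - L * t * ‖v‖ ^ 2
        = ⟪f' (a + t • v) - f' a, v⟫ - L * t * ‖v‖ ^ 2 := by rw [inner_sub_left]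
      _ ≤ ‖f' (a + t • v) - f' a‖ * ‖v‖ - L * t * ‖v‖ ^ 2 := by gcongr; exact real_inner_le_norm _ _
      _ ≤ L * ‖a + t • v - a‖ * ‖v‖ - L * t * ‖v‖ ^ 2 := by gcongr; exact hlip _ _
      _ = 0 := by rw [add_sub_cancel_left, norm_smul, Real.norm_of_nonneg ht]; ring
  have hanti : AntitoneOn φ (Set.Ici 0) :=
    antitoneOn_of_hasDerivWithinAt_nonpos (convex_Ici 0)
      (fun t _ => (hφ t).continuousAt.continuousWithinAt)
      (fun t _ => (hφ t).hasDerivWithinAt)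
      (fun t ht => hφ'_nonpos t (interior_subset ht))
  have := hanti (Set.mem_Ici.mpr le_rfl) (Set.mem_Ici.mpr zero_le_one) zero_le_one
  simp only [φ, v, one_smul, zero_smul, add_zero, add_sub_cancel] at this
  linarith

theorem descent_condition_general (n : ℕ) (L : ℝ)
    (f : EuclideanSpace ℝ (Fin n) → ℝ) (f' : EuclideanSpace ℝ (Fin n) → EuclideanSpace ℝ (Fin n))
    (hf : ∀ x, HasGradientAt f (f' x) x)
    (hlip : ∀ x y, ‖f' x - f' y‖ ≤ L * ‖x - y‖)
    (g : EuclideanSpace ℝ (Fin n) → ℝ) (hg : ConvexOn ℝ Set.univ g)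
    (s α : ℝ) (hs : 0 < s) (hα : 0 < α)
    (x y xp : EuclideanSpace ℝ (Fin n))
    (hy : ∀ w, g y + ‖y - (x - s • f' x)‖ ^ 2 / (2 * s) ≤ g w + ‖w - (x - s • f' x)‖ ^ 2 / (2 * s))
    (hxp : ∀ w, g xp + ‖xp - (x - α • f' y)‖ ^ 2 / (2 * α) ≤ g w + ‖w - (x - α • f' y)‖ ^ 2 / (2 * α)) :
    (f x + g x) - (f xp + g xp) ≥ (1 / (2 * α)) * ‖x - xp‖ ^ 2
      + (1 / s - L / 2 - 1 / (2 * α)) * ‖x - y‖ ^ 2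
      + (1 / (2 * α) - L / 2) * ‖y - xp‖ ^ 2 := by
  have hfy := le_add_inner_add_sq_of_lipschitz_gradient hf hlip x y
  have hfxp := le_add_inner_add_sq_of_lipschitz_gradient hf hlip y xp
  have hgy := hg.add_inner_le_of_isMin_prox_grad hs hy x
  have hgxp := hg.add_inner_le_of_isMin_prox_grad hα hxp y
  have hpolar : ‖x - y‖ ^ 2 = ‖x - xp‖ ^ 2 - 2 * ⟪x - xp, y - xp⟫ + ‖y - xp‖ ^ 2 := by
    rw [← norm_sub_sq_real, sub_sub_sub_cancel_right]
  rw [← neg_sub x y, inner_neg_right, norm_neg] at hfy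
  rw [← neg_sub y xp, inner_neg_right, norm_neg] at hfxp
  rw [real_inner_self_eq_norm_sq] at hgy
  linear_combination hfy + hfxp + hgy + hgxp - (1 / (2 * α)) * hpolar

theorem descent_condition (n : ℕ) (L : ℝ) (hL : 0 < L)
    (f : EuclideanSpace ℝ (Fin n) → ℝ) (f' : EuclideanSpace ℝ (Fin n) → EuclideanSpace ℝ (Fin n))
    (hf : ∀ x, HasGradientAt f (f' x) x)
    (hlip : ∀ x y, ‖f' x - f' y‖ ≤ L * ‖x - y‖)
    (g : EuclideanSpace ℝ (Fin n) → ℝ) (hg : ConvexOn ℝ Set.univ g)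
    (s α : ℝ) (hs : 0 < s) (hα : 0 < α)
    (x y xp : EuclideanSpace ℝ (Fin n))
    (hy : ∀ w, g y + ‖y - (x - s • f' x)‖ ^ 2 / (2 * s) ≤ g w + ‖w - (x - s • f' x)‖ ^ 2 / (2 * s))
    (hxp : ∀ w, g xp + ‖xp - (x - α • f' y)‖ ^ 2 / (2 * α) ≤ g w + ‖w - (x - α • f' y)‖ ^ 2 / (2 * α)) :
    (f x + g x) - (f xp + g xp) ≥ (1 / (2 * α)) * ‖x - xp‖ ^ 2
      + (1 / s - L / 2 - 1 / (2 * α)) * ‖x - y‖ ^ 2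
      + (1 / (2 * α) - L / 2) * ‖y - xp‖ ^ 2 :=
  descent_condition_general n L f f' hf hlip g hg s α hs hα x y xp hy hxp
end

section
/- Let f be convex, differentiable with L-Lipschitz gradient, g : ℝ^n → ℝ convex, F = f + g, and 0 < s ≤ α with Ls < 1. With y = prox_{sg}(x - s∇f(x)) and x⁺ = prox_{αg}(x - α∇f(y)), one has F(x) - F(x⁺) ≥ (1/α - (L/2)(1/(1 - Ls) - s/α)²)‖x - x⁺‖². -/
/-!
Three inequalities at the prox point `x⁺` (the subgradient inequality for `g`, the gradient
inequality for `f` at `y` and the descent lemma for `f` between `y` and `x⁺`) add up to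
`F x - F x⁺ ≥ ‖x - x⁺‖² / α - (L / 2) ‖y - x⁺‖²`, so it remains to bound `‖y - x⁺‖`.
Monotonicity of `∂g` at `y` and `x⁺` gives, with `a = x - y`, `b = x - x⁺` and `θ = s / α`,
`⟪a - θ b, a - b⟫ ≤ s L ‖a‖ ‖a - b‖`. Splitting `a - θ b` in two ways yields
`‖a‖ ≤ ‖b‖ + s L ‖a‖` and `‖a - b‖ ≤ (1 - θ) ‖b‖ + s L ‖a‖`; eliminating `‖a‖` gives
`‖y - x⁺‖ ≤ (1 / (1 - L s) - s / α) ‖x - x⁺‖`.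
-/

open scoped RealInnerProductSpace
open Set AffineMap Filter Topology

section Smooth

variable {E : Type*} [NormedAddCommGroup E] [InnerProductSpace ℝ E] [CompleteSpace E]
  {f : E → ℝ} {f' : E → E}

theorem hasDerivAt_comp_lineMap_of_hasGradientAt (hf : ∀ x, HasGradientAt f (f' x) x)
    (a b : E) (t : ℝ) :
    HasDerivAt (fun t => f (lineMap a b t)) ⟪f' (lineMap a b t), b - a⟫ t := by
  have h := (hf (lineMap a b t)).hasFDerivAt.comp_hasDerivAt t hasDerivAt_lineMap
  rw [InnerProductSpace.toDual_apply_apply] at h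
  exact h

theorem ConvexOn.add_inner_gradient_le (hconv : ConvexOn ℝ univ f)
    (hf : ∀ x, HasGradientAt f (f' x) x) (a b : E) :
    f a + ⟪f' a, b - a⟫ ≤ f b := by
  have hline : ConvexOn ℝ univ (fun t => f (lineMap a b t)) :=
    hconv.comp_affineMap (lineMap a b)
  have hslope := hline.le_slope_of_hasDerivAt (mem_univ 0) (mem_univ 1) zero_lt_one
    (hasDerivAt_comp_lineMap_of_hasGradientAt hf a b 0)
  simp only [slope_def_field, lineMap_apply_zero, lineMap_apply_one, sub_zero, div_one] at hslope
  linarith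

theorem le_add_inner_gradient_add_sq_of_lipschitz (hf : ∀ x, HasGradientAt f (f' x) x) {L : ℝ}
    (hlip : ∀ x y, ‖f' x - f' y‖ ≤ L * ‖x - y‖) (a b : E) :
    f b ≤ f a + ⟪f' a, b - a⟫ + L / 2 * ‖b - a‖ ^ 2 := by
  set φ : ℝ → ℝ := fun t => f (lineMap a b t) - t * ⟪f' a, b - a⟫ - L / 2 * t ^ 2 * ‖b - a‖ ^ 2
  have hφ : ∀ t, HasDerivAt φ
      (⟪f' (lineMap a b t), b - a⟫ - ⟪f' a, b - a⟫ - L * t * ‖b - a‖ ^ 2) t := by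
    intro t
    refine (((hasDerivAt_comp_lineMap_of_hasGradientAt hf a b t).sub
      ((hasDerivAt_id t).mul_const _)).sub
      (((hasDerivAt_pow 2 t).const_mul (L / 2)).mul_const (‖b - a‖ ^ 2))).congr_deriv ?_
    ring
  have hφ' : ∀ t, 0 ≤ t →
      ⟪f' (lineMap a b t), b - a⟫ - ⟪f' a, b - a⟫ - L * t * ‖b - a‖ ^ 2 ≤ 0 := by
    intro t ht
    have hdist : ‖lineMap a b t - a‖ = t * ‖b - a‖ := by
      rw [← vsub_eq_sub, lineMap_vsub_left, norm_smul, Real.norm_of_nonneg ht, vsub_eq_sub]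
    refine sub_nonpos.2 ?_
    calc ⟪f' (lineMap a b t), b - a⟫ - ⟪f' a, b - a⟫
        = ⟪f' (lineMap a b t) - f' a, b - a⟫ := (inner_sub_left _ _ _).symm
      _ ≤ ‖f' (lineMap a b t) - f' a‖ * ‖b - a‖ := real_inner_le_norm _ _
      _ ≤ L * (t * ‖b - a‖) * ‖b - a‖ := by rw [← hdist]; gcongr; exact hlip _ _
      _ = L * t * ‖b - a‖ ^ 2 := by ring
  have hanti : AntitoneOn φ (Ici 0) := by
    apply antitoneOn_of_deriv_nonpos (convex_Ici 0)
      (fun t _ => (hφ t).continuousAt.continuousWithinAt)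
      (fun t _ => (hφ t).differentiableAt.differentiableWithinAt)
    intro t ht
    rw [interior_Ici] at ht
    rw [(hφ t).deriv]
    exact hφ' t ht.le
  have h01 := hanti (mem_Ici.2 le_rfl) (mem_Ici.2 zero_le_one) zero_le_one
  simp only [φ, lineMap_apply_zero, lineMap_apply_one] at h01
  linarith

end Smooth

section Prox

variable {E : Type*} [NormedAddCommGroup E] [InnerProductSpace ℝ E]

def IsProx (g : E → ℝ) (c : ℝ) (v z : E) : Prop :=
  ∀ w, g z + ‖z - v‖ ^ 2 / (2 * c) ≤ g w + ‖w - v‖ ^ 2 / (2 * c)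

def IsSubgradient (g : E → ℝ) (p z : E) : Prop :=
  ∀ w, g z + ⟪p, w - z⟫ ≤ g w

theorem IsSubgradient.inner_sub_nonneg {g : E → ℝ} {p q z w : E} (hp : IsSubgradient g p z)
    (hq : IsSubgradient g q w) : 0 ≤ ⟪p - q, z - w⟫ := by
  have h₁ := hp w
  have h₂ := hq z
  have hpz : ⟪p, z - w⟫ = -⟪p, w - z⟫ := by rw [← inner_neg_right, neg_sub]
  rw [inner_sub_left, hpz]
  linarith

theorem IsProx.add_inner_le_add_mul {g : E → ℝ} {c t : ℝ} {v z : E} (hg : ConvexOn ℝ univ g)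
    (hc : 0 < c) (h : IsProx g c v z) (ht : t ∈ Ioc (0 : ℝ) 1) (w : E) :
    g z + ⟪c⁻¹ • (v - z), w - z⟫ ≤ g w + t * (‖w - z‖ ^ 2 / (2 * c)) := by
  obtain ⟨ht0, ht1⟩ := ht
  have hconv : g (lineMap z w t) ≤ (1 - t) * g z + t * g w := by
    simpa only [lineMap_apply_module, smul_eq_mul] using
      hg.2 (mem_univ z) (mem_univ w) (sub_nonneg.2 ht1) ht0.le (sub_add_cancel 1 t)
  have hnorm : ‖lineMap z w t - v‖ ^ 2
      = ‖z - v‖ ^ 2 + 2 * t * ⟪z - v, w - z⟫ + t ^ 2 * ‖w - z‖ ^ 2 := by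
    rw [lineMap_apply, vsub_eq_sub, vadd_eq_add,
      show t • (w - z) + z - v = (z - v) + t • (w - z) by abel,
      norm_add_sq_real, inner_smul_right, norm_smul, Real.norm_of_nonneg ht0.le]
    ring
  have hmin := h (lineMap z w t)
  rw [hnorm, add_div, add_div] at hmin
  have hvz : ⟪v - z, w - z⟫ = -⟪z - v, w - z⟫ := by rw [← inner_neg_left, neg_sub]
  rw [real_inner_smul_left, hvz]
  have key : t * (g w + t * (‖w - z‖ ^ 2 / (2 * c)) - (g z + c⁻¹ * -⟪z - v, w - z⟫))
      = t * (g w - g z) + 2 * t * ⟪z - v, w - z⟫ / (2 * c) + t ^ 2 * ‖w - z‖ ^ 2 / (2 * c) := by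
    field_simp
    ring
  have hpos : 0 ≤ t * (g w + t * (‖w - z‖ ^ 2 / (2 * c)) - (g z + c⁻¹ * -⟪z - v, w - z⟫)) := by
    rw [key]; linarith
  linarith [nonneg_of_mul_nonneg_right hpos ht0]

theorem IsProx.isSubgradient {g : E → ℝ} {c : ℝ} {v z : E} (hg : ConvexOn ℝ univ g) (hc : 0 < c)
    (h : IsProx g c v z) : IsSubgradient g (c⁻¹ • (v - z)) z := by
  intro w
  have hlim : Tendsto (fun t => g w + t * (‖w - z‖ ^ 2 / (2 * c))) (𝓝[>] 0) (𝓝 (g w)) := by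
    have : Continuous fun t : ℝ => g w + t * (‖w - z‖ ^ 2 / (2 * c)) := by fun_prop
    simpa using (this.tendsto 0).mono_left nhdsWithin_le_nhds
  refine ge_of_tendsto hlim ?_
  filter_upwards [Ioc_mem_nhdsGT zero_lt_one] with t ht
  exact h.add_inner_le_add_mul hg hc ht w

theorem inner_sub_smul_le_of_isProx {g : E → ℝ} {s α : ℝ} {x y z u v : E}
    (hg : ConvexOn ℝ univ g) (hs : 0 < s) (hα : 0 < α)
    (hy : IsProx g s (x - s • u) y) (hz : IsProx g α (x - α • v) z) :
    ⟪(x - y) - (s / α) • (x - z), z - y⟫ ≤ s * ⟪u - v, z - y⟫ := by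
  have hmono := (hz.isSubgradient hg hα).inner_sub_nonneg (hy.isSubgradient hg hs)
  have hvec : α⁻¹ • (x - α • v - z) - s⁻¹ • (x - s • u - y)
      = s⁻¹ • (s • (u - v) - ((x - y) - (s / α) • (x - z))) := by
    match_scalars <;> field_simp
    ring
  rw [hvec, real_inner_smul_left, inner_sub_left, real_inner_smul_left] at hmono
  exact sub_nonneg.1 ((mul_nonneg_iff_of_pos_left (inv_pos.2 hs)).1 hmono)

end Prox

section Geometry

variable {E : Type*} [NormedAddCommGroup E] [InnerProductSpace ℝ E]

theorem mul_norm_sub_le_inner_sub {a b : E} (hab : ‖b‖ ≤ ‖a‖) :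
    (‖a‖ - ‖b‖) * ‖a - b‖ ≤ ⟪a, a - b⟫ := by
  have hsq := norm_sub_sq_real a b
  rw [inner_sub_right, real_inner_self_eq_norm_sq]
  nlinarith [sq_nonneg (‖a - b‖ - (‖a‖ - ‖b‖)), mul_nonneg (norm_nonneg b) (sub_nonneg.2 hab)]

theorem norm_le_add_of_inner_sub_smul_le {θ r : ℝ} {a b : E} (hθ₀ : 0 ≤ θ) (hθ₁ : θ ≤ 1)
    (hr : 0 ≤ r) (h : ⟪a - θ • b, a - b⟫ ≤ r * ‖a - b‖) : ‖a‖ ≤ ‖b‖ + r := by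
  rcases le_total ‖a‖ ‖b‖ with hab | hba
  · linarith
  have hsplit : ⟪a - θ • b, a - b⟫ = θ * ‖a - b‖ ^ 2 + (1 - θ) * ⟪a, a - b⟫ := by
    rw [show a - θ • b = θ • (a - b) + (1 - θ) • a by module, inner_add_left,
      real_inner_smul_left, real_inner_smul_left, real_inner_self_eq_norm_sq]
  have hgap : ‖a‖ - ‖b‖ ≤ ‖a - b‖ := norm_sub_norm_le a b
  have hlow := mul_norm_sub_le_inner_sub hba
  rcases (norm_nonneg (a - b)).eq_or_lt with h0 | hpos
  · linarith
  have : (‖a‖ - ‖b‖) * ‖a - b‖ ≤ r * ‖a - b‖ := by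
    nlinarith [mul_le_mul_of_nonneg_left hgap (mul_nonneg hθ₀ hpos.le),
      mul_le_mul_of_nonneg_left hlow (sub_nonneg.2 hθ₁)]
  linarith [le_of_mul_le_mul_right this hpos]

theorem norm_sub_le_of_inner_sub_smul_le {θ r : ℝ} {a b : E} (hθ₁ : θ ≤ 1) (hr : 0 ≤ r)
    (h : ⟪a - θ • b, a - b⟫ ≤ r * ‖a - b‖) : ‖a - b‖ ≤ (1 - θ) * ‖b‖ + r := by
  have hsplit : ⟪a - θ • b, a - b⟫ = ‖a - b‖ ^ 2 + (1 - θ) * ⟪b, a - b⟫ := by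
    rw [show a - θ • b = (a - b) + (1 - θ) • b by module, inner_add_left,
      real_inner_smul_left, real_inner_self_eq_norm_sq]
  have hcs : -(‖b‖ * ‖a - b‖) ≤ ⟪b, a - b⟫ :=
    neg_le_of_abs_le (abs_real_inner_le_norm b (a - b))
  rcases (norm_nonneg (a - b)).eq_or_lt with h0 | hpos
  · rw [← h0]; exact add_nonneg (mul_nonneg (sub_nonneg.2 hθ₁) (norm_nonneg b)) hr
  have : ‖a - b‖ * ‖a - b‖ ≤ ((1 - θ) * ‖b‖ + r) * ‖a - b‖ := by
    nlinarith [mul_le_mul_of_nonneg_left hcs (sub_nonneg.2 hθ₁)]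
  exact le_of_mul_le_mul_right this hpos

end Geometry

section ProximalGradient

variable {E : Type*} [NormedAddCommGroup E] [InnerProductSpace ℝ E]

theorem norm_prox_sub_prox_le {g : E → ℝ} {f' : E → E} {L s α : ℝ} {x y z : E}
    (hg : ConvexOn ℝ univ g) (hlip : ∀ x y, ‖f' x - f' y‖ ≤ L * ‖x - y‖) (hL : 0 ≤ L)
    (hs : 0 < s) (hsα : s ≤ α) (hsL : L * s < 1)
    (hy : IsProx g s (x - s • f' x) y) (hz : IsProx g α (x - α • f' y) z) :
    ‖z - y‖ ≤ (1 / (1 - L * s) - s / α) * ‖x - z‖ := by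
  have hα : 0 < α := hs.trans_le hsα
  have hθ₁ : s / α ≤ 1 := (div_le_one hα).2 hsα
  have hr : 0 ≤ s * (L * ‖x - y‖) := by positivity
  have hxyz : (x - y) - (x - z) = z - y := sub_sub_sub_cancel_left y z x
  have h : ⟪(x - y) - (s / α) • (x - z), (x - y) - (x - z)⟫
      ≤ s * (L * ‖x - y‖) * ‖(x - y) - (x - z)‖ := by
    rw [hxyz]
    calc ⟪(x - y) - (s / α) • (x - z), z - y⟫
        ≤ s * ⟪f' x - f' y, z - y⟫ := inner_sub_smul_le_of_isProx hg hs hα hy hz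
      _ ≤ s * (‖f' x - f' y‖ * ‖z - y‖) := by gcongr; exact real_inner_le_norm _ _
      _ ≤ s * (L * ‖x - y‖ * ‖z - y‖) := by gcongr; exact hlip x y
      _ = s * (L * ‖x - y‖) * ‖z - y‖ := by ring
  have hxy := norm_le_add_of_inner_sub_smul_le (by positivity) hθ₁ hr h
  have hzy := norm_sub_le_of_inner_sub_smul_le hθ₁ hr h
  rw [hxyz] at hzy
  have hLs : 0 < 1 - L * s := sub_pos.2 hsL
  have hxy' : ‖x - y‖ ≤ ‖x - z‖ / (1 - L * s) := by
    rw [le_div_iff₀ hLs]; linarith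
  have hgeom : L * s / (1 - L * s) = 1 / (1 - L * s) - 1 := by
    rw [eq_sub_iff_add_eq, div_add_one hLs.ne', add_sub_cancel]
  calc ‖z - y‖ ≤ (1 - s / α) * ‖x - z‖ + s * (L * ‖x - y‖) := hzy
    _ ≤ (1 - s / α) * ‖x - z‖ + s * (L * (‖x - z‖ / (1 - L * s))) := by gcongr
    _ = (1 - s / α) * ‖x - z‖ + L * s / (1 - L * s) * ‖x - z‖ := by ring
    _ = (1 / (1 - L * s) - s / α) * ‖x - z‖ := by rw [hgeom]; ring

variable [CompleteSpace E]

theorem norm_sub_sq_div_sub_le_of_isProx {f g : E → ℝ} {f' : E → E} {L α : ℝ} {x y z : E}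
    (hfconv : ConvexOn ℝ univ f) (hf : ∀ x, HasGradientAt f (f' x) x)
    (hlip : ∀ x y, ‖f' x - f' y‖ ≤ L * ‖x - y‖) (hg : ConvexOn ℝ univ g) (hα : 0 < α)
    (hz : IsProx g α (x - α • f' y) z) :
    ‖x - z‖ ^ 2 / α - L / 2 * ‖z - y‖ ^ 2 ≤ f x + g x - (f z + g z) := by
  have hgx := hz.isSubgradient hg hα x
  have hfx := hfconv.add_inner_gradient_le hf y x
  have hfz := le_add_inner_gradient_add_sq_of_lipschitz hf hlip y z
  have hinner : ⟪α⁻¹ • (x - α • f' y - z), x - z⟫ = ‖x - z‖ ^ 2 / α - ⟪f' y, x - z⟫ := by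
    rw [show x - α • f' y - z = (x - z) - α • f' y by abel, smul_sub, smul_smul,
      inv_mul_cancel₀ hα.ne', one_smul, inner_sub_left, real_inner_smul_left,
      real_inner_self_eq_norm_sq, inv_mul_eq_div]
  have hsplit : ⟪f' y, x - z⟫ = ⟪f' y, x - y⟫ - ⟪f' y, z - y⟫ := by
    rw [← inner_sub_right, sub_sub_sub_cancel_right]
  linarith

end ProximalGradient

theorem convex_descent_condition (n : ℕ) (L : ℝ) (hL : 0 < L)
    (f : EuclideanSpace ℝ (Fin n) → ℝ) (f' : EuclideanSpace ℝ (Fin n) → EuclideanSpace ℝ (Fin n))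
    (hfconv : ConvexOn ℝ Set.univ f)
    (hf : ∀ x, HasGradientAt f (f' x) x)
    (hlip : ∀ x y, ‖f' x - f' y‖ ≤ L * ‖x - y‖)
    (g : EuclideanSpace ℝ (Fin n) → ℝ) (hg : ConvexOn ℝ Set.univ g)
    (s α : ℝ) (hs : 0 < s) (hsα : s ≤ α) (hsL : L * s < 1)
    (x y xp : EuclideanSpace ℝ (Fin n))
    (hy : ∀ w, g y + ‖y - (x - s • f' x)‖ ^ 2 / (2 * s) ≤ g w + ‖w - (x - s • f' x)‖ ^ 2 / (2 * s))
    (hxp : ∀ w, g xp + ‖xp - (x - α • f' y)‖ ^ 2 / (2 * α) ≤ g w + ‖w - (x - α • f' y)‖ ^ 2 / (2 * α)) :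
    (f x + g x) - (f xp + g xp)
      ≥ (1 / α - (L / 2) * (1 / (1 - L * s) - s / α) ^ 2) * ‖x - xp‖ ^ 2 := by
  have hα : 0 < α := hs.trans_le hsα
  have hstep := norm_sub_sq_div_sub_le_of_isProx hfconv hf hlip hg hα hxp
  have hclose := norm_prox_sub_prox_le hg hlip hL.le hs hsα hsL hy hxp
  have hclose_sq := pow_le_pow_left₀ (norm_nonneg _) hclose 2
  calc (1 / α - (L / 2) * (1 / (1 - L * s) - s / α) ^ 2) * ‖x - xp‖ ^ 2
      = ‖x - xp‖ ^ 2 / α - L / 2 * ((1 / (1 - L * s) - s / α) * ‖x - xp‖) ^ 2 := by ring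
    _ ≤ ‖x - xp‖ ^ 2 / α - L / 2 * ‖xp - y‖ ^ 2 := by gcongr
    _ ≤ (f x + g x) - (f xp + g xp) := hstep
end
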